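/- Let R be a commutative ring and a,b,c,d,z ∈ R, and set q = abcd. Define T_M = Σ_{t=0}^{⌊M/2⌋} Φ_{M−2t, 2t}(a,b,c,d) · z^t · q^{C(t,2)} (where C(t,2) = t(t−1)/2), U_N = T_{2N} and V_N = T_{2N+1}. Then for every integer N ≥ 1: U_{N+1} = (1 + ab + ac(1+bd)q^{N−1}z)·U_N − a(b − zq^{N−1})(1 − czq^{N−1})·U_{N−1}, and V_{N+1} = (1 + ab + (1+ac)zq^N)·V_N − a(b − zq^N)(1 − czq^{N−1})·V_{N−1}. -/

import Mathlib

/-!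
Deleting the largest part `j` of a partition swaps the roles of odd and even rows, so
`Φ_{N,M+1}(a,b,c,d) = ∑_{j ≤ N} a^⌈j/2⌉ b^⌊j/2⌋ Φ_{j,M}(c,d,a,b)`; in particular raising
`N` by one adds a single term. Applied termwise to `T`, this gives four first-order
relations between `U`, `V` and two auxiliary sums `P`, `Q` of values of `Φ(c,d,a,b)`.
Eliminating `V` and `P` leaves a first-order system for `(U, Q)`, eliminating `U` and `P`
one for `(V, Q)`, and eliminating `Q` from either system gives the three-term recurrence.
-/

open scoped BigOperators

/-- A partition: a weakly decreasing sequence of nonnegative integers (0-indexed: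
`parts i` is λ_{i+1}) with finitely many nonzero terms. -/
structure IntPartition where
  parts : ℕ → ℕ
  antitone : Antitone parts
  fin_support : ∃ N, ∀ n, N ≤ n → parts n = 0

namespace IntPartition

/-- Σ_{i≥1} ⌈λ_{2i-1}/2⌉ (odd-indexed rows, 1-based; ceiling). -/
noncomputable def statA (l : IntPartition) : ℕ := ∑ᶠ i : ℕ, (l.parts (2 * i) + 1) / 2
/-- Σ_{i≥1} ⌊λ_{2i-1}/2⌋. -/
noncomputable def statB (l : IntPartition) : ℕ := ∑ᶠ i : ℕ, l.parts (2 * i) / 2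
/-- Σ_{i≥1} ⌈λ_{2i}/2⌉. -/
noncomputable def statC (l : IntPartition) : ℕ := ∑ᶠ i : ℕ, (l.parts (2 * i + 1) + 1) / 2
/-- Σ_{i≥1} ⌊λ_{2i}/2⌋. -/
noncomputable def statD (l : IntPartition) : ℕ := ∑ᶠ i : ℕ, l.parts (2 * i + 1) / 2

/-- ℓ(λ): the number of nonzero parts. -/
noncomputable def length (l : IntPartition) : ℕ := Set.ncard (Function.support l.parts)

/-- |λ|: the sum of all parts. -/
noncomputable def size (l : IntPartition) : ℕ := ∑ᶠ i : ℕ, l.parts i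

/-- A partition is strict if its nonzero parts are pairwise distinct. -/
def Strict (l : IntPartition) : Prop := ∀ i, l.parts (i + 1) ≠ 0 → l.parts (i + 1) < l.parts i

/-- The Andrews–Stanley four-parameter weight ω(λ). -/
noncomputable def weight {R : Type*} [CommRing R] (a b c d : R) (l : IntPartition) : R :=
  a ^ l.statA * b ^ l.statB * c ^ l.statC * d ^ l.statD

/-- O(λ): the number of odd parts. -/
noncomputable def oddParts (l : IntPartition) : ℕ := Set.ncard {i : ℕ | Odd (l.parts i)}

/-- O(λ'): the number of odd parts of the conjugate partition. -/
noncomputable def conjOddParts (l : IntPartition) : ℕ :=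
  Set.ncard {j : ℕ | Odd (Set.ncard {i : ℕ | j + 1 ≤ l.parts i})}

end IntPartition

/-- The q-shifted factorial (x;q)_n. -/
def poch {R : Type*} [CommRing R] (x q : R) (n : ℕ) : R :=
  ∏ k ∈ Finset.range n, (1 - x * q ^ k)

/-- The infinite q-shifted factorial (x;q)_∞ (as an infinite product of reals). -/
noncomputable def pochInf (x q : ℝ) : ℝ := ∏' k : ℕ, (1 - x * q ^ k)

/-- The basic hypergeometric series ₂φ₁(α,β;γ;q,w). -/
noncomputable def phi21 (α β γ q w : ℝ) : ℝ :=
  ∑' n : ℕ, poch α q n * poch β q n / (poch q q n * poch γ q n) * w ^ n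

/-- Absolute convergence of the ₂φ₁ series. -/
def phi21Summable (α β γ q w : ℝ) : Prop :=
  Summable (fun n : ℕ => poch α q n * poch β q n / (poch q q n * poch γ q n) * w ^ n)

/-- The Gaussian binomial coefficient [N choose k]_q. -/
noncomputable def gauss {K : Type*} [Field K] (q : K) (N k : ℕ) : K :=
  poch q q N / (poch q q k * poch q q (N - k))

/-- Ψ_N(a,b,c,d;z): the generating function of strict partitions with parts ≤ N. -/
noncomputable def Psi {R : Type*} [CommRing R] (a b c d z : R) (N : ℕ) : R :=
  ∑ᶠ μ : {μ : IntPartition // μ.Strict ∧ μ.parts 0 ≤ N},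
    IntPartition.weight a b c d μ.1 * z ^ μ.1.length

/-- Φ_{N,M}(a,b,c,d): the sum of ω(λ) over partitions λ with at most M parts,
each part ≤ N. -/
noncomputable def PhiNM {R : Type*} [CommRing R] (a b c d : R) (N M : ℕ) : R :=
  ∑ᶠ l : {l : IntPartition // l.parts 0 ≤ N ∧ l.length ≤ M},
    IntPartition.weight a b c d l.1

/-- T_M = Σ_{t=0}^{⌊M/2⌋} Φ_{M−2t,2t}(a,b,c,d) z^t q^{C(t,2)}. -/
noncomputable def TGen {R : Type*} [CommRing R] (a b c d z : R) (M : ℕ) : R :=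
  ∑ t ∈ Finset.range (M / 2 + 1),
    PhiNM a b c d (M - 2 * t) (2 * t) * z ^ t * (a * b * c * d) ^ (t.choose 2)

namespace IntPartition

@[ext]
theorem ext {l m : IntPartition} (h : l.parts = m.parts) : l = m := by
  cases l; cases m; simpa using h

instance : Zero IntPartition := ⟨⟨0, antitone_const, 0, fun _ _ => rfl⟩⟩

@[simp]
theorem zero_parts (i : ℕ) : (0 : IntPartition).parts i = 0 := rfl

theorem eq_zero_of_parts_zero {l : IntPartition} (h : l.parts 0 = 0) : l = 0 := by
  ext i
  simpa [h] using l.antitone (Nat.zero_le i)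

@[simp]
theorem weight_zero {R : Type*} [CommRing R] (a b c d : R) : weight a b c d 0 = 1 := by
  simp [weight, statA, statB, statC, statD]

theorem support_parts_eq_Iio (l : IntPartition) : Function.support l.parts = Set.Iio l.length := by
  obtain ⟨B, hB⟩ := l.fin_support
  have hfin : (Function.support l.parts).Finite :=
    (Set.finite_Iio B).subset fun i hi => by
      by_contra hiB
      exact hi (hB i (by simpa using hiB))
  have hlower : IsLowerSet (Function.support l.parts) := fun i j hji hi =>
    Function.mem_support.2 fun hj => hi (Nat.eq_zero_of_le_zero (hj ▸ l.antitone hji))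
  obtain ⟨n, hn⟩ := hlower.eq_univ_or_Iio.resolve_left fun h => Set.infinite_univ (h ▸ hfin)
  rw [length, hn, Set.ncard_Iio_nat]

theorem length_le_iff {l : IntPartition} {M : ℕ} : l.length ≤ M ↔ l.parts M = 0 := by
  rw [← Function.notMem_support, support_parts_eq_Iio, Set.mem_Iio, not_lt]

def tail (l : IntPartition) : IntPartition where
  parts i := l.parts (i + 1)
  antitone _ _ h := l.antitone (Nat.succ_le_succ h)
  fin_support := l.fin_support.imp fun _ hB n hn => hB _ (by omega)

def cons (j : ℕ) (l : IntPartition) (h : l.parts 0 ≤ j) : IntPartition where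
  parts := Nat.rec j fun k _ => l.parts k
  antitone := antitone_nat_of_succ_le fun
    | 0 => h
    | k + 1 => l.antitone (Nat.le_succ k)
  fin_support :=
    let ⟨B, hB⟩ := l.fin_support
    ⟨B + 1, fun n hn => by
      cases n with
      | zero => omega
      | succ k => exact hB k (by omega)⟩

theorem finsum_parts_two_mul (l : IntPartition) {g : ℕ → ℕ} (hg : g 0 = 0) :
    ∑ᶠ i, g (l.parts (2 * i)) = g (l.parts 0) + ∑ᶠ i, g (l.tail.parts (2 * i + 1)) := by
  obtain ⟨B, hB⟩ := l.fin_support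
  have vanish : ∀ i, B ≤ i → g (l.parts i) = 0 := fun i hi => by rw [hB i hi, hg]
  rw [finsum_eq_sum_of_support_subset (s := Finset.range (B + 1)) _ fun i hi => ?_,
    finsum_eq_sum_of_support_subset (s := Finset.range B) _ fun i hi => ?_,
    Finset.sum_range_succ', add_comm]
  · rfl
  · by_contra h
    exact hi (vanish _ (by simp at h; omega))
  · by_contra h
    exact hi (vanish _ (by simp at h; omega))

theorem weight_eq_mul_weight_tail {R : Type*} [CommRing R] (a b c d : R) (l : IntPartition) :
    weight a b c d l =
      a ^ ((l.parts 0 + 1) / 2) * b ^ (l.parts 0 / 2) * weight c d a b l.tail := by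
  have hA : l.statA = (l.parts 0 + 1) / 2 + l.tail.statC :=
    l.finsum_parts_two_mul (g := fun p => (p + 1) / 2) rfl
  have hB : l.statB = l.parts 0 / 2 + l.tail.statD :=
    l.finsum_parts_two_mul (g := fun p => p / 2) rfl
  have hC : l.statC = l.tail.statA := rfl
  have hD : l.statD = l.tail.statB := rfl
  simp only [weight, hA, hB, hC, hD, pow_add]
  ring

instance finite_bounded (N M : ℕ) :
    Finite {l : IntPartition // l.parts 0 ≤ N ∧ l.length ≤ M} :=
  Finite.of_injective (fun l (i : Fin M) => (⟨l.1.parts i, Nat.lt_succ_of_le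
    ((l.1.antitone (Nat.zero_le _)).trans l.2.1)⟩ : Fin (N + 1))) fun l m hlm => by
    ext i
    by_cases hi : i < M
    · simpa using congrFun hlm ⟨i, hi⟩
    · have vanish (p : IntPartition) (hp : p.length ≤ M) : p.parts i = 0 :=
        Nat.eq_zero_of_le_zero (length_le_iff.1 hp ▸ p.antitone (not_lt.1 hi))
      rw [vanish _ l.2.2, vanish _ m.2.2]

def headTailEquiv (N M : ℕ) : {l : IntPartition // l.parts 0 ≤ N ∧ l.length ≤ M + 1} ≃
    Σ j : Fin (N + 1), {μ : IntPartition // μ.parts 0 ≤ j ∧ μ.length ≤ M} where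
  toFun l := ⟨⟨l.1.parts 0, Nat.lt_succ_of_le l.2.1⟩, l.1.tail,
    l.1.antitone (Nat.zero_le 1), length_le_iff.2 ((length_le_iff (l := l.1)).1 l.2.2)⟩
  invFun x := ⟨cons x.1 x.2.1 x.2.2.1, Nat.le_of_lt_succ x.1.isLt,
    length_le_iff.2 ((length_le_iff (l := x.2.1)).1 x.2.2.2)⟩
  left_inv l := by
    ext (_ | _) <;> rfl
  right_inv _ := rfl

end IntPartition

open IntPartition Finset

section PhiNM

variable {R : Type*} [CommRing R]

theorem PhiNM_zero_right (a b c d : R) (N : ℕ) : PhiNM a b c d N 0 = 1 := by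
  have hzero : (0 : IntPartition).parts 0 ≤ N ∧ (0 : IntPartition).length ≤ 0 :=
    ⟨Nat.zero_le N, length_le_iff.2 rfl⟩
  rw [PhiNM, finsum_eq_single _ ⟨0, hzero⟩ fun l hl => (hl (Subtype.ext
    (eq_zero_of_parts_zero (length_le_iff.1 l.2.2)))).elim, weight_zero]

theorem PhiNM_succ_right (a b c d : R) (N M : ℕ) :
    PhiNM a b c d N (M + 1) =
      ∑ j ∈ range (N + 1), a ^ ((j + 1) / 2) * b ^ (j / 2) * PhiNM c d a b j M := by
  have := Fintype.ofFinite {l : IntPartition // l.parts 0 ≤ N ∧ l.length ≤ M + 1}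
  have (j : ℕ) := Fintype.ofFinite {l : IntPartition // l.parts 0 ≤ j ∧ l.length ≤ M}
  rw [PhiNM, finsum_eq_sum_of_fintype, Fintype.sum_equiv (headTailEquiv N M) _
    (fun x => a ^ ((x.1 + 1 : ℕ) / 2) * b ^ ((x.1 : ℕ) / 2) * weight c d a b x.2.1)
    fun l => weight_eq_mul_weight_tail a b c d l.1, Fintype.sum_sigma,
    ← Fin.sum_univ_eq_sum_range (fun j => a ^ ((j + 1) / 2) * b ^ (j / 2) * PhiNM c d a b j M)]
  simp only [PhiNM, finsum_eq_sum_of_fintype, mul_sum]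

theorem PhiNM_zero_left (a b c d : R) (M : ℕ) : PhiNM a b c d 0 M = 1 := by
  induction M generalizing a b c d with
  | zero => exact PhiNM_zero_right a b c d 0
  | succ M ih => simp [PhiNM_succ_right, ih]

theorem PhiNM_succ_succ (a b c d : R) (N M : ℕ) :
    PhiNM a b c d (N + 1) (M + 1) = PhiNM a b c d N (M + 1) +
      a ^ ((N + 2) / 2) * b ^ ((N + 1) / 2) * PhiNM c d a b (N + 1) M := by
  rw [PhiNM_succ_right, PhiNM_succ_right, sum_range_succ]

theorem PhiNM_two_mul_add_one (a b c d : R) (k M : ℕ) :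
    PhiNM a b c d (2 * k + 1) (M + 1) =
      PhiNM a b c d (2 * k) (M + 1) + a * (a * b) ^ k * PhiNM c d a b (2 * k + 1) M := by
  rw [PhiNM_succ_succ, show (2 * k + 2) / 2 = k + 1 by omega, show (2 * k + 1) / 2 = k by omega]
  ring

theorem PhiNM_two_mul_succ (a b c d : R) (k M : ℕ) :
    PhiNM a b c d (2 * (k + 1)) (M + 1) =
      PhiNM a b c d (2 * k + 1) (M + 1) + (a * b) ^ (k + 1) * PhiNM c d a b (2 * (k + 1)) M := by
  rw [show 2 * (k + 1) = 2 * k + 1 + 1 by ring, PhiNM_succ_succ,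
    show (2 * k + 1 + 2) / 2 = k + 1 by omega, show (2 * k + 1 + 1) / 2 = k + 1 by omega]
  ring

end PhiNM

section Recurrence

variable {R : Type*} [CommRing R] (a b c d z : R)

noncomputable def UGen (n : ℕ) : R := TGen a b c d z (2 * n)

noncomputable def VGen (n : ℕ) : R := TGen a b c d z (2 * n + 1)

-- `z * PGen n` and `a * z * QGen n` are the amounts by which `T (2n+2)` exceeds `T (2n+1)`
-- and `T (2n+3)` exceeds `T (2n+2)`.
noncomputable def PGen (n : ℕ) : R :=
  ∑ p ∈ antidiagonal n, (a * b) ^ p.1 * PhiNM c d a b (2 * p.1) (2 * p.2 + 1) * z ^ p.2 *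
    (a * b * c * d) ^ (p.2 + 1).choose 2

noncomputable def QGen (n : ℕ) : R :=
  ∑ p ∈ antidiagonal n, (a * b) ^ p.1 * PhiNM c d a b (2 * p.1 + 1) (2 * p.2 + 1) * z ^ p.2 *
    (a * b * c * d) ^ (p.2 + 1).choose 2

-- Indexing by the antidiagonal `k + t = n` avoids the truncated subtraction `M - 2 t`.
theorem TGen_two_mul_add {r : ℕ} (hr : r < 2) (n : ℕ) :
    TGen a b c d z (2 * n + r) = ∑ p ∈ antidiagonal n,
      PhiNM a b c d (2 * p.1 + r) (2 * p.2) * z ^ p.2 * (a * b * c * d) ^ p.2.choose 2 := by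
  rw [TGen, ← Nat.sum_antidiagonal_swap, Nat.sum_antidiagonal_eq_sum_range_succ_mk,
    show (2 * n + r) / 2 = n by omega]
  refine sum_congr rfl fun t ht => ?_
  rw [Prod.swap_prod_mk, show 2 * n + r - 2 * t = 2 * (n - t) + r by
    have := mem_range.1 ht; omega]

theorem UGen_eq_sum (n : ℕ) : UGen a b c d z n = ∑ p ∈ antidiagonal n,
    PhiNM a b c d (2 * p.1) (2 * p.2) * z ^ p.2 * (a * b * c * d) ^ p.2.choose 2 :=
  TGen_two_mul_add a b c d z (r := 0) two_pos n

theorem VGen_eq_sum (n : ℕ) : VGen a b c d z n = ∑ p ∈ antidiagonal n,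
    PhiNM a b c d (2 * p.1 + 1) (2 * p.2) * z ^ p.2 * (a * b * c * d) ^ p.2.choose 2 :=
  TGen_two_mul_add a b c d z one_lt_two n

theorem UGen_succ (n : ℕ) : UGen a b c d z (n + 1) = VGen a b c d z n + z * PGen a b c d z n := by
  cases n with
  | zero =>
    simp [UGen_eq_sum, VGen_eq_sum, PGen, Nat.sum_antidiagonal_succ, PhiNM_zero_left,
      PhiNM_zero_right, add_comm]
  | succ m =>
    have termwise (k t : ℕ) :
        PhiNM a b c d (2 * (k + 1)) (2 * (t + 1)) * z ^ (t + 1) *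
            (a * b * c * d) ^ (t + 1).choose 2 =
          PhiNM a b c d (2 * k + 1) (2 * (t + 1)) * z ^ (t + 1) *
            (a * b * c * d) ^ (t + 1).choose 2 +
          z * ((a * b) ^ (k + 1) * PhiNM c d a b (2 * (k + 1)) (2 * t + 1) * z ^ t *
            (a * b * c * d) ^ (t + 1).choose 2) := by
      rw [show 2 * (t + 1) = 2 * t + 1 + 1 by ring, PhiNM_two_mul_succ]
      ring
    rw [UGen_eq_sum, Nat.sum_antidiagonal_succ', Nat.sum_antidiagonal_succ, VGen_eq_sum,
      Nat.sum_antidiagonal_succ', PGen, Nat.sum_antidiagonal_succ]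
    dsimp only
    rw [mul_add z, mul_sum, sum_congr rfl fun p _ => termwise p.1 p.2, sum_add_distrib]
    simp only [PhiNM_zero_left, PhiNM_zero_right, mul_zero]
    ring

theorem VGen_succ (n : ℕ) :
    VGen a b c d z (n + 1) = UGen a b c d z (n + 1) + a * z * QGen a b c d z n := by
  have termwise (k t : ℕ) :
      PhiNM a b c d (2 * k + 1) (2 * (t + 1)) * z ^ (t + 1) * (a * b * c * d) ^ (t + 1).choose 2 =
        PhiNM a b c d (2 * k) (2 * (t + 1)) * z ^ (t + 1) * (a * b * c * d) ^ (t + 1).choose 2 +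
        a * z * ((a * b) ^ k * PhiNM c d a b (2 * k + 1) (2 * t + 1) * z ^ t *
          (a * b * c * d) ^ (t + 1).choose 2) := by
    rw [show 2 * (t + 1) = 2 * t + 1 + 1 by ring, PhiNM_two_mul_add_one]
    ring
  rw [VGen_eq_sum, Nat.sum_antidiagonal_succ', UGen_eq_sum, Nat.sum_antidiagonal_succ', QGen]
  dsimp only
  rw [mul_sum, sum_congr rfl fun p _ => termwise p.1 p.2, sum_add_distrib]
  simp only [PhiNM_zero_right, mul_zero]
  ring

theorem PGen_succ (n : ℕ) : PGen a b c d z (n + 1) =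
    a * b * QGen a b c d z n + (a * b * c * d) ^ (n + 1) * UGen a b c d z (n + 1) := by
  have termwise (k t : ℕ) (hkt : k + t = n) :
      (a * b) ^ (k + 1) * PhiNM c d a b (2 * (k + 1)) (2 * t + 1) * z ^ t *
          (a * b * c * d) ^ (t + 1).choose 2 =
        a * b * ((a * b) ^ k * PhiNM c d a b (2 * k + 1) (2 * t + 1) * z ^ t *
          (a * b * c * d) ^ (t + 1).choose 2) +
        (a * b * c * d) ^ (n + 1) * (PhiNM a b c d (2 * (k + 1)) (2 * t) * z ^ t *
          (a * b * c * d) ^ t.choose 2) := by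
    rw [PhiNM_two_mul_succ, Nat.choose_succ_succ', Nat.choose_one_right, ← hkt]
    ring
  rw [PGen, Nat.sum_antidiagonal_succ, UGen_eq_sum, Nat.sum_antidiagonal_succ, QGen]
  dsimp only
  rw [mul_add ((a * b * c * d) ^ (n + 1)), mul_sum, mul_sum,
    sum_congr rfl fun p hp => termwise p.1 p.2 (mem_antidiagonal.1 hp), sum_add_distrib]
  simp only [PhiNM_zero_left, mul_zero, Nat.choose_succ_succ' (n + 1), Nat.choose_one_right]
  ring

theorem QGen_eq (n : ℕ) : QGen a b c d z n =
    PGen a b c d z n + c * (a * b * c * d) ^ n * VGen a b c d z n := by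
  have termwise (k t : ℕ) (hkt : k + t = n) :
      (a * b) ^ k * PhiNM c d a b (2 * k + 1) (2 * t + 1) * z ^ t *
          (a * b * c * d) ^ (t + 1).choose 2 =
        (a * b) ^ k * PhiNM c d a b (2 * k) (2 * t + 1) * z ^ t *
          (a * b * c * d) ^ (t + 1).choose 2 +
        c * (a * b * c * d) ^ n * (PhiNM a b c d (2 * k + 1) (2 * t) * z ^ t *
          (a * b * c * d) ^ t.choose 2) := by
    rw [PhiNM_two_mul_add_one, Nat.choose_succ_succ', Nat.choose_one_right, ← hkt]
    ring
  rw [QGen, PGen, VGen_eq_sum, mul_sum, ← sum_add_distrib]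
  exact sum_congr rfl fun p hp => termwise p.1 p.2 (mem_antidiagonal.1 hp)

theorem UGen_zero : UGen a b c d z 0 = 1 := by
  simp [UGen_eq_sum, PhiNM_zero_right]

theorem VGen_zero : VGen a b c d z 0 = 1 := by
  simp [VGen_eq_sum, PhiNM_zero_right]

theorem PGen_zero : PGen a b c d z 0 = 1 := by
  simp [PGen, PhiNM_zero_left]

theorem QGen_zero : QGen a b c d z 0 = 1 + c := by
  rw [QGen_eq, PGen_zero, VGen_zero]
  ring

theorem UGen_one : UGen a b c d z 1 = 1 + z := by
  rw [UGen_succ, VGen_zero, PGen_zero, mul_one]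

theorem UGen_add_two_eq_QGen (n : ℕ) : UGen a b c d z (n + 2) =
    (1 + z * (a * b * c * d) ^ (n + 1)) * UGen a b c d z (n + 1) +
      a * z * (1 + b) * QGen a b c d z n := by
  linear_combination UGen_succ a b c d z (n + 1) + VGen_succ a b c d z n +
    z * PGen_succ a b c d z n

theorem QGen_succ_eq_UGen (n : ℕ) : QGen a b c d z (n + 1) =
    (a * b + a * c * z * (a * b * c * d) ^ (n + 1)) * QGen a b c d z n +
      (1 + c) * (a * b * c * d) ^ (n + 1) * UGen a b c d z (n + 1) := by
  linear_combination QGen_eq a b c d z (n + 1) + PGen_succ a b c d z n +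
    c * (a * b * c * d) ^ (n + 1) * VGen_succ a b c d z n

theorem VGen_succ_eq_QGen (n : ℕ) : VGen a b c d z (n + 1) =
    (1 - c * z * (a * b * c * d) ^ n) * VGen a b c d z n + z * (1 + a) * QGen a b c d z n := by
  linear_combination VGen_succ a b c d z n + UGen_succ a b c d z n - z * QGen_eq a b c d z n

theorem QGen_succ_eq_VGen (n : ℕ) : QGen a b c d z (n + 1) =
    (a * b - a * z * (a * b * c * d) ^ (n + 1)) * QGen a b c d z n +
      (1 + c) * (a * b * c * d) ^ (n + 1) * VGen a b c d z (n + 1) := by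
  linear_combination QGen_eq a b c d z (n + 1) + PGen_succ a b c d z n -
    (a * b * c * d) ^ (n + 1) * VGen_succ a b c d z n

theorem UGen_recurrence (n : ℕ) : UGen a b c d z (n + 2) =
    (1 + a * b + a * c * (1 + b * d) * (a * b * c * d) ^ n * z) * UGen a b c d z (n + 1) -
      a * (b - z * (a * b * c * d) ^ n) * (1 - c * z * (a * b * c * d) ^ n) * UGen a b c d z n := by
  cases n with
  | zero =>
    linear_combination UGen_add_two_eq_QGen a b c d z 0 -
      (a * b + a * c * z) * UGen_one a b c d z + a * (b - z) * (1 - c * z) * UGen_zero a b c d z +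
      a * z * (1 + b) * QGen_zero a b c d z
  | succ m =>
    linear_combination UGen_add_two_eq_QGen a b c d z (m + 1) +
      a * z * (1 + b) * QGen_succ_eq_UGen a b c d z m -
      (a * b + a * c * z * (a * b * c * d) ^ (m + 1)) * UGen_add_two_eq_QGen a b c d z m

theorem VGen_recurrence (n : ℕ) : VGen a b c d z (n + 2) =
    (1 + a * b + (1 + a * c) * z * (a * b * c * d) ^ (n + 1)) * VGen a b c d z (n + 1) -
      a * (b - z * (a * b * c * d) ^ (n + 1)) * (1 - c * z * (a * b * c * d) ^ n) *
        VGen a b c d z n := by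
  linear_combination VGen_succ_eq_QGen a b c d z (n + 1) +
    z * (1 + a) * QGen_succ_eq_VGen a b c d z n -
    (a * b - a * z * (a * b * c * d) ^ (n + 1)) * VGen_succ_eq_QGen a b c d z n

end Recurrence

theorem tGen_assoc_recurrence {R : Type*} [CommRing R] (a b c d z q : R)
    (hq : q = a * b * c * d) (U V : ℕ → R)
    (hU : ∀ n, U n = TGen a b c d z (2 * n)) (hV : ∀ n, V n = TGen a b c d z (2 * n + 1))
    (N : ℕ) (hN : 1 ≤ N) :
    U (N + 1) =
        (1 + a * b + a * c * (1 + b * d) * q ^ (N - 1) * z) * U N -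
          a * (b - z * q ^ (N - 1)) * (1 - c * z * q ^ (N - 1)) * U (N - 1) ∧
    V (N + 1) =
        (1 + a * b + (1 + a * c) * z * q ^ N) * V N -
          a * (b - z * q ^ N) * (1 - c * z * q ^ (N - 1)) * V (N - 1) := by
  obtain ⟨n, rfl⟩ : ∃ n, N = n + 1 := ⟨N - 1, by omega⟩
  simp only [hq, hU, hV, Nat.add_sub_cancel]
  exact ⟨UGen_recurrence a b c d z n, VGen_recurrence a b c d z n⟩
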